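/- arXiv:0912.2816 — 2 statements merged into one kernel-verified Lean document; each statement's English description precedes it below -/
import Mathlib

section
/- Let ρ ≥ 0 with ρ < 1 and let u ∈ (0, 1/2]. Then C(u,u;ρ) ≥ u·g(u;ρ), i.e. Φ₂(Φ⁻¹(u),Φ⁻¹(u);ρ) ≥ u·Φ(√((1−ρ)/(1+ρ))·Φ⁻¹(u)). -/
open MeasureTheory Real Set

/-- Standard normal density φ. -/
noncomputable def stdPdf (x : ℝ) : ℝ :=
  (1 / Real.sqrt (2 * Real.pi)) * Real.exp (-x ^ 2 / 2)

/-- Standard normal distribution function Φ. -/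
noncomputable def stdCdf (h : ℝ) : ℝ := ∫ x in Set.Iio h, stdPdf x

/-- Inverse Φ⁻¹ of the standard normal distribution function (on (0,1)). -/
noncomputable def stdQuantile : ℝ → ℝ := Function.invFun stdCdf

/-- Bivariate standard normal density φ₂ with correlation ρ. -/
noncomputable def binPdf (x y ρ : ℝ) : ℝ :=
  (1 / (2 * Real.pi * Real.sqrt (1 - ρ ^ 2))) *
    Real.exp (-(x ^ 2 - 2 * ρ * x * y + y ^ 2) / (2 * (1 - ρ ^ 2)))

/-- Bivariate standard normal distribution function Φ₂. -/
noncomputable def binCdf (h k ρ : ℝ) : ℝ :=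
  ∫ x in Set.Iio h, ∫ y in Set.Iio k, binPdf x y ρ

/-- The bivariate normal copula C(u,v;ρ) = Φ₂(Φ⁻¹(u),Φ⁻¹(v);ρ). -/
noncomputable def normCopula (u v ρ : ℝ) : ℝ :=
  binCdf (stdQuantile u) (stdQuantile v) ρ

/-- g(u;ρ) = Φ(√((1−ρ)/(1+ρ))·Φ⁻¹(u)). -/
noncomputable def gFun (u ρ : ℝ) : ℝ :=
  stdCdf (Real.sqrt ((1 - ρ) / (1 + ρ)) * stdQuantile u)

/-!
Conditioning on the first coordinate gives
Φ₂(h, h; ρ) = ∫_{x < h} φ(x) Φ((h − ρx)/√(1 − ρ²)) dx.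
For ρ ≥ 0 and x < h the argument of Φ is at least (1 − ρ)h/√(1 − ρ²) = √((1 − ρ)/(1 + ρ)) h,
so with h = Φ⁻¹(u) the integrand dominates φ(x) g(u; ρ), whose integral over x < h is u g(u; ρ).
-/

open scoped NNReal
open ProbabilityTheory

lemma stdPdf_eq_gaussianPDFReal : stdPdf = gaussianPDFReal 0 1 := by
  ext x
  simp [stdPdf, gaussianPDFReal]

lemma stdPdf_nonneg (x : ℝ) : 0 ≤ stdPdf x :=
  stdPdf_eq_gaussianPDFReal ▸ gaussianPDFReal_nonneg 0 1 x

lemma integrable_stdPdf : Integrable stdPdf :=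
  stdPdf_eq_gaussianPDFReal ▸ integrable_gaussianPDFReal 0 1

lemma measureReal_gaussianReal (m : ℝ) {v : ℝ≥0} (hv : v ≠ 0) (s : Set ℝ) :
    (gaussianReal m v).real s = ∫ x in s, gaussianPDFReal m v x := by
  rw [measureReal_def, gaussianReal_apply_eq_integral _ hv, ENNReal.toReal_ofReal
    (setIntegral_nonneg_of_ae (ae_of_all _ (gaussianPDFReal_nonneg m v)))]

lemma stdCdf_eq_measureReal (h : ℝ) : stdCdf h = (gaussianReal 0 1).real (Iio h) := by
  rw [measureReal_gaussianReal _ one_ne_zero, stdCdf, stdPdf_eq_gaussianPDFReal]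

lemma stdCdf_eq_cdf : stdCdf = cdf (gaussianReal 0 1) := by
  have := nullSingletonClass_gaussianReal (μ := 0) one_ne_zero
  ext h
  rw [stdCdf_eq_measureReal, cdf_eq_real, measureReal_congr Iio_ae_eq_Iic]

lemma monotone_stdCdf : Monotone stdCdf :=
  stdCdf_eq_cdf ▸ monotone_cdf _

lemma abs_stdCdf_le_one (h : ℝ) : |stdCdf h| ≤ 1 := by
  rw [stdCdf_eq_cdf, abs_of_nonneg (cdf_nonneg _ h)]
  exact cdf_le_one _ h

lemma continuous_stdCdf : Continuous stdCdf :=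
  continuous_iff_continuousAt.2 fun a ↦
    (integrable_stdPdf.integrableOn.continuousOn_Iic_primitive_Iio (a₀ := a + 1)).continuousAt
      (Iic_mem_nhds (lt_add_one a))

lemma stdCdf_stdQuantile {u : ℝ} (h0 : 0 < u) (h1 : u < 1) : stdCdf (stdQuantile u) = u := by
  obtain ⟨a, ha⟩ : ∃ a, stdCdf a ≤ u :=
    (stdCdf_eq_cdf ▸ tendsto_cdf_atBot (gaussianReal 0 1)).eventually_le_const h0 |>.exists
  obtain ⟨b, hb⟩ : ∃ b, u ≤ stdCdf b :=
    (stdCdf_eq_cdf ▸ tendsto_cdf_atTop (gaussianReal 0 1)).eventually_const_le h1 |>.exists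
  exact Function.invFun_eq (intermediate_value_univ a b continuous_stdCdf ⟨ha, hb⟩)

lemma measureReal_gaussianReal_Iio (m : ℝ) {v : ℝ≥0} (hv : v ≠ 0) (k : ℝ) :
    (gaussianReal m v).real (Iio k) = stdCdf ((k - m) / √v) := by
  have hs : 0 < √(v : ℝ) := Real.sqrt_pos.2 (by positivity)
  have hstd : (gaussianReal m v).map (fun x ↦ (x - m) / √v) = gaussianReal 0 1 := by
    rw [← Function.comp_def (· / √(v : ℝ)) (· - m), ← Measure.map_map (by fun_prop) (by fun_prop),
      gaussianReal_map_sub_const, gaussianReal_map_div_const]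
    congr 1
    · simp
    · ext; simp [Real.sq_sqrt, hv]
  have hpre : (fun x ↦ (x - m) / √v) ⁻¹' Iio ((k - m) / √v) = Iio k := by
    ext x; simp [div_lt_div_iff_of_pos_right hs]
  rw [stdCdf_eq_measureReal, ← hstd, map_measureReal_apply (by fun_prop) measurableSet_Iio, hpre]

lemma integrable_stdPdf_mul_stdCdf_comp {f : ℝ → ℝ} (hf : Measurable f) :
    Integrable fun x ↦ stdPdf x * stdCdf (f x) :=
  integrable_stdPdf.mul_bdd (continuous_stdCdf.measurable.comp hf).aestronglyMeasurable
    (ae_of_all _ fun x ↦ abs_stdCdf_le_one (f x))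

lemma binPdf_eq_stdPdf_mul_gaussianPDFReal {ρ : ℝ} (hρ : ρ ^ 2 < 1) (x y : ℝ) :
    binPdf x y ρ = stdPdf x * gaussianPDFReal (ρ * x) (1 - ρ ^ 2).toNNReal y := by
  have hv : 0 < 1 - ρ ^ 2 := by linarith
  have hsqrt : √(2 * π * (1 - ρ ^ 2)) = √(2 * π) * √(1 - ρ ^ 2) := Real.sqrt_mul (by positivity) _
  simp only [binPdf, stdPdf, gaussianPDFReal, Real.coe_toNNReal _ hv.le, hsqrt]
  rw [mul_mul_mul_comm, ← Real.exp_add]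
  congr 1
  · field_simp
    rw [Real.sq_sqrt (by positivity)]
  · congr 1
    field_simp
    ring

lemma integral_Iio_binPdf {ρ : ℝ} (hρ : ρ ^ 2 < 1) (x k : ℝ) :
    ∫ y in Iio k, binPdf x y ρ = stdPdf x * stdCdf ((k - ρ * x) / √(1 - ρ ^ 2)) := by
  have hv : 0 < 1 - ρ ^ 2 := by linarith
  have hv' : (1 - ρ ^ 2).toNNReal ≠ 0 := by simpa using hρ
  simp_rw [binPdf_eq_stdPdf_mul_gaussianPDFReal hρ, integral_const_mul,
    ← measureReal_gaussianReal _ hv', measureReal_gaussianReal_Iio _ hv', Real.coe_toNNReal _ hv.le]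

lemma binCdf_eq_integral_stdPdf_mul_stdCdf {ρ : ℝ} (hρ : ρ ^ 2 < 1) (h k : ℝ) :
    binCdf h k ρ = ∫ x in Iio h, stdPdf x * stdCdf ((k - ρ * x) / √(1 - ρ ^ 2)) := by
  simp_rw [binCdf, integral_Iio_binPdf hρ]

lemma sqrt_one_sub_div_one_add {ρ : ℝ} (h₁ : -1 < ρ) (h₂ : ρ < 1) :
    √((1 - ρ) / (1 + ρ)) = (1 - ρ) / √(1 - ρ ^ 2) := by
  have hm : 0 < √(1 - ρ) := Real.sqrt_pos.2 (by linarith)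
  have hp : 0 < √(1 + ρ) := Real.sqrt_pos.2 (by linarith)
  rw [show 1 - ρ ^ 2 = (1 - ρ) * (1 + ρ) by ring, Real.sqrt_mul (by linarith),
    Real.sqrt_div (by linarith), eq_div_iff (by positivity)]
  field_simp
  exact Real.sq_sqrt (by linarith)

theorem lower_bound_ug (ρ u : ℝ) (hρ0 : 0 ≤ ρ) (hρ1 : ρ < 1)
    (hu : u ∈ Set.Ioc (0 : ℝ) (1 / 2)) :
    normCopula u u ρ ≥ u * gFun u ρ := by
  obtain ⟨hu0, hu_half⟩ := hu
  set h := stdQuantile u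
  have hρ2 : ρ ^ 2 < 1 := by nlinarith
  rw [normCopula, gFun, binCdf_eq_integral_stdPdf_mul_stdCdf hρ2,
    sqrt_one_sub_div_one_add (by linarith) hρ1, ge_iff_le]
  calc u * stdCdf ((1 - ρ) / √(1 - ρ ^ 2) * h)
      = ∫ x in Iio h, stdPdf x * stdCdf ((1 - ρ) / √(1 - ρ ^ 2) * h) := by
        rw [integral_mul_const, ← stdCdf, stdCdf_stdQuantile hu0 (by linarith)]
    _ ≤ ∫ x in Iio h, stdPdf x * stdCdf ((h - ρ * x) / √(1 - ρ ^ 2)) := by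
        refine setIntegral_mono_on (integrable_stdPdf.integrableOn.mul_const _)
          (integrable_stdPdf_mul_stdCdf_comp (by fun_prop)).integrableOn measurableSet_Iio
          fun x hx ↦ mul_le_mul_of_nonneg_left (monotone_stdCdf ?_) (stdPdf_nonneg x)
        rw [div_mul_eq_mul_div]
        gcongr
        nlinarith [mem_Iio.1 hx]
end

section
/- Let u ∈ (0,1) and ρ ∈ (−1,1). Then C(u,u;ρ) = 2·C(u, 1/2; −√((1−ρ)/2)), i.e. Φ₂(Φ⁻¹(u),Φ⁻¹(u);ρ) = 2·Φ₂(Φ⁻¹(u), 0; −√((1−ρ)/2)). -/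
open MeasureTheory Real Set

lemma binPdf_nonneg (x y ρ : ℝ) : 0 ≤ binPdf x y ρ := by
  unfold binPdf
  positivity

lemma binPdf_symm (x y ρ : ℝ) : binPdf x y ρ = binPdf y x ρ := by
  unfold binPdf
  ring_nf

lemma binPdf_continuous (ρ : ℝ) : Continuous (fun p : ℝ × ℝ => binPdf p.1 p.2 ρ) := by
  unfold binPdf
  fun_prop

lemma binPdf_integrable {ρ : ℝ} (hρ : ρ ∈ Set.Ioo (-1 : ℝ) 1) :
    Integrable (fun p : ℝ × ℝ => binPdf p.1 p.2 ρ)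
      ((volume : Measure ℝ).prod (volume : Measure ℝ)) := by
  obtain ⟨h1, h2⟩ := hρ
  have hK : (0:ℝ) < 1 - ρ ^ 2 := by nlinarith
  set K : ℝ := 1 / (2 * Real.pi * Real.sqrt (1 - ρ ^ 2)) with hKdef
  have hKpos : 0 ≤ K := by
    have := Real.pi_pos
    positivity
  have hg : Integrable
      (fun p : ℝ × ℝ => K * (Real.exp (-(1/4 : ℝ) * p.1 ^ 2) * Real.exp (-(1/4 : ℝ) * p.2 ^ 2)))
      ((volume : Measure ℝ).prod (volume : Measure ℝ)) := by
    exact ((integrable_exp_neg_mul_sq (by norm_num : (0:ℝ) < 1/4)).mul_prod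
      (integrable_exp_neg_mul_sq (by norm_num : (0:ℝ) < 1/4))).const_mul K
  refine hg.mono' ?_ ?_
  · exact (binPdf_continuous ρ).aestronglyMeasurable
  · refine Filter.Eventually.of_forall (fun p => ?_)
    rw [Real.norm_of_nonneg (binPdf_nonneg _ _ _)]
    unfold binPdf
    rw [← hKdef, ← Real.exp_add]
    refine mul_le_mul_of_nonneg_left ?_ hKpos
    refine Real.exp_le_exp.mpr ?_
    rw [div_le_iff₀ (by positivity : (0:ℝ) < 2 * (1 - ρ ^ 2))]
    nlinarith [sq_nonneg (p.1 - ρ * p.2), sq_nonneg (p.2 - ρ * p.1), sq_nonneg p.1, sq_nonneg p.2]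

lemma binPdf_transform {ρ : ℝ} (hρ : ρ ∈ Set.Ioo (-1 : ℝ) 1) (x z : ℝ) :
    Real.sqrt (2 * (1 - ρ)) * binPdf x (Real.sqrt (2 * (1 - ρ)) * z + x) ρ
      = binPdf x z (-Real.sqrt ((1 - ρ) / 2)) := by
  obtain ⟨h1, h2⟩ := hρ
  have h1ρ : (0:ℝ) < 1 - ρ := by linarith
  have h2ρ : (0:ℝ) < 1 + ρ := by linarith
  set s : ℝ := Real.sqrt ((1 - ρ) / 2) with hsdef
  set c : ℝ := Real.sqrt (2 * (1 - ρ)) with hcdef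
  have hs2 : s ^ 2 = (1 - ρ) / 2 := Real.sq_sqrt (by linarith)
  have hsnn : 0 ≤ s := Real.sqrt_nonneg _
  have hc : c = 2 * s := by
    rw [hcdef, show 2 * (1 - ρ) = (2 * s) ^ 2 by nlinarith]
    exact Real.sqrt_sq (by linarith)
  have hc2 : c ^ 2 = 2 * (1 - ρ) := Real.sq_sqrt (by linarith)
  have hcpos : 0 < c := Real.sqrt_pos.mpr (by linarith)
  set a : ℝ := Real.sqrt ((1 + ρ) / 2) with hadef
  have hapos : 0 < a := Real.sqrt_pos.mpr (by linarith)
  have hsq : Real.sqrt (1 - ρ ^ 2) = c * a := by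
    rw [hcdef, hadef, ← Real.sqrt_mul (by linarith)]
    congr 1
    ring
  have hsq2 : Real.sqrt (1 - (-s) ^ 2) = a := by
    rw [neg_pow, hs2]
    congr 1
    ring
  unfold binPdf
  rw [hsq, hsq2]
  have hpi := Real.pi_pos
  have hexp : -(x ^ 2 - 2 * ρ * x * (c * z + x) + (c * z + x) ^ 2) / (2 * (1 - ρ ^ 2))
      = -(x ^ 2 - 2 * (-s) * x * z + z ^ 2) / (2 * (1 - (-s) ^ 2)) := by
    have hnum : x ^ 2 - 2 * ρ * x * (c * z + x) + (c * z + x) ^ 2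
        = (2 * (1 - ρ)) * (x ^ 2 + 2 * s * x * z + z ^ 2) := by
      linear_combination z ^ 2 * hc2 + 2 * (1 - ρ) * x * z * hc
    have hden : 2 * (1 - (-s) ^ 2) = 1 + ρ := by
      rw [neg_pow, hs2]; ring
    rw [hnum, hden, show 2 * (1 - ρ ^ 2) = (2 * (1 - ρ)) * (1 + ρ) by ring]
    rw [div_eq_div_iff (by positivity) (by linarith)]
    ring
  rw [hexp]
  field_simp

lemma inner_transform {ρ : ℝ} (hρ : ρ ∈ Set.Ioo (-1 : ℝ) 1) (x : ℝ) :
    ∫ z in Set.Iio (0:ℝ), binPdf x z (-Real.sqrt ((1 - ρ) / 2))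
      = ∫ y in Set.Iio x, binPdf x y ρ := by
  obtain ⟨h1, h2⟩ := hρ
  set c : ℝ := Real.sqrt (2 * (1 - ρ)) with hcdef
  have hcpos : 0 < c := Real.sqrt_pos.mpr (by linarith)
  have step1 : ∫ z in Set.Iio (0:ℝ), binPdf x z (-Real.sqrt ((1 - ρ) / 2))
      = ∫ z in Set.Iio (0:ℝ), c * binPdf x (c * z + x) ρ := by
    refine setIntegral_congr_fun measurableSet_Iio (fun z _ => ?_)
    exact (binPdf_transform ⟨h1, h2⟩ x z).symm
  rw [step1, MeasureTheory.integral_const_mul]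
  have key : ∫ z in Set.Iio (0:ℝ), binPdf x (c * z + x) ρ
      = |c⁻¹| * ∫ y in Set.Iio x, binPdf x y ρ := by
    have e1 : ∫ z in Set.Iio (0:ℝ), binPdf x (c * z + x) ρ
        = ∫ z, (Set.Iio x).indicator (fun y => binPdf x y ρ) (c * z + x) := by
      rw [← MeasureTheory.integral_indicator measurableSet_Iio]
      congr 1 with z
      by_cases hz : z < 0
      · rw [Set.indicator_of_mem (by exact hz : z ∈ Set.Iio 0),
          Set.indicator_of_mem (by simp only [Set.mem_Iio]; nlinarith : c * z + x ∈ Set.Iio x)]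
      · rw [Set.indicator_of_notMem (by exact hz : z ∉ Set.Iio 0),
          Set.indicator_of_notMem (by simp only [Set.mem_Iio]; push_neg at hz ⊢; nlinarith :
            c * z + x ∉ Set.Iio x)]
    rw [e1]
    have e2 : (fun z : ℝ => (Set.Iio x).indicator (fun y => binPdf x y ρ) (c * z + x))
        = fun z : ℝ => (fun t => (Set.Iio x).indicator (fun y => binPdf x y ρ) (t + x)) (c * z) := by
      funext z; rfl
    rw [e2, MeasureTheory.Measure.integral_comp_mul_left
      (fun t => (Set.Iio x).indicator (fun y => binPdf x y ρ) (t + x)) c]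
    rw [MeasureTheory.integral_add_right_eq_self
      ((Set.Iio x).indicator (fun y => binPdf x y ρ)) x]
    rw [MeasureTheory.integral_indicator measurableSet_Iio]
    simp [smul_eq_mul]
  rw [key, abs_of_pos (inv_pos.mpr hcpos)]
  field_simp

lemma diag_null (h : ℝ) :
    ((volume : Measure ℝ).prod (volume : Measure ℝ)) {p : ℝ × ℝ | p.1 = p.2} = 0 := by
  have hD : MeasurableSet {p : ℝ × ℝ | p.1 = p.2} :=
    measurableSet_eq_fun measurable_fst measurable_snd
  rw [Measure.prod_apply hD]
  have : ∀ x : ℝ, (volume : Measure ℝ) (Prod.mk x ⁻¹' {p : ℝ × ℝ | p.1 = p.2}) = 0 := by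
    intro x
    have : Prod.mk x ⁻¹' {p : ℝ × ℝ | p.1 = p.2} = {x} := by
      ext y; simp [eq_comm]
    rw [this]
    exact measure_singleton x
  simp [this]

lemma binCdf_diag {ρ : ℝ} (hρ : ρ ∈ Set.Ioo (-1 : ℝ) 1) (h : ℝ) :
    binCdf h h ρ = 2 * binCdf h 0 (-Real.sqrt ((1 - ρ) / 2)) := by
  set f : ℝ × ℝ → ℝ := fun p => binPdf p.1 p.2 ρ with hfdef
  have hint : Integrable f ((volume : Measure ℝ).prod (volume : Measure ℝ)) :=
    binPdf_integrable hρ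
  set T : Set (ℝ × ℝ) := {p | p.1 < h ∧ p.2 < p.1} with hTdef
  set T' : Set (ℝ × ℝ) := {p | p.2 < h ∧ p.1 < p.2} with hT'def
  have hTm : MeasurableSet T :=
    (measurableSet_lt measurable_fst measurable_const).inter
      (measurableSet_lt measurable_snd measurable_fst)
  have hT'm : MeasurableSet T' :=
    (measurableSet_lt measurable_snd measurable_const).inter
      (measurableSet_lt measurable_fst measurable_snd)
  -- Step A : binCdf h h ρ as a product-set integral
  have stepA : binCdf h h ρ = ∫ p in (Set.Iio h) ×ˢ (Set.Iio h), f p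
      ∂((volume : Measure ℝ).prod (volume : Measure ℝ)) := by
    rw [MeasureTheory.setIntegral_prod f hint.integrableOn]
    rfl
  -- Step B : the square is a.e. equal to T ∪ T'
  have hnull := diag_null h
  have hsub1 : ((Set.Iio h) ×ˢ (Set.Iio h)) \ (T ∪ T') ⊆ {p : ℝ × ℝ | p.1 = p.2} := by
    intro p hp
    obtain ⟨hpS, hpU⟩ := hp
    have hx : p.1 < h := hpS.1
    have hy : p.2 < h := hpS.2
    have hnT : p ∉ T := fun hh => hpU (Or.inl hh)
    have hnT' : p ∉ T' := fun hh => hpU (Or.inr hh)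
    rcases lt_trichotomy p.1 p.2 with hlt | heq | hgt
    · exact absurd (show p ∈ T' from ⟨hy, hlt⟩) hnT'
    · exact heq
    · exact absurd (show p ∈ T from ⟨hx, hgt⟩) hnT
  have hsub2 : (T ∪ T') \ ((Set.Iio h) ×ˢ (Set.Iio h)) = ∅ := by
    ext p
    simp only [Set.mem_diff, Set.mem_union, Set.mem_empty_iff_false, iff_false, not_and, not_not]
    intro hp
    rcases hp with hp | hp
    · exact ⟨hp.1, lt_trans hp.2 hp.1⟩
    · exact ⟨lt_trans hp.2 hp.1, hp.1⟩
  have stepB : ((Set.Iio h) ×ˢ (Set.Iio h) : Set (ℝ × ℝ))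
      =ᵐ[(volume : Measure ℝ).prod (volume : Measure ℝ)] ((T ∪ T' : Set (ℝ × ℝ))) :=
    MeasureTheory.ae_eq_set.mpr
      ⟨measure_mono_null hsub1 hnull, by rw [hsub2]; exact measure_empty⟩
  have stepB' : ∫ p in (Set.Iio h) ×ˢ (Set.Iio h), f p
      ∂((volume : Measure ℝ).prod (volume : Measure ℝ))
      = ∫ p in T ∪ T', f p ∂((volume : Measure ℝ).prod (volume : Measure ℝ)) :=
    MeasureTheory.setIntegral_congr_set stepB
  -- Step C : split the union
  have hdisj : Disjoint T T' := by
    rw [Set.disjoint_left]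
    intro p hp hp'
    exact lt_irrefl _ (lt_trans hp.2 hp'.2)
  have stepC : ∫ p in T ∪ T', f p ∂((volume : Measure ℝ).prod (volume : Measure ℝ))
      = (∫ p in T, f p ∂((volume : Measure ℝ).prod (volume : Measure ℝ)))
        + ∫ p in T', f p ∂((volume : Measure ℝ).prod (volume : Measure ℝ)) :=
    MeasureTheory.setIntegral_union hdisj hT'm hint.integrableOn hint.integrableOn
  -- Step D : the two triangles give equal integrals
  have hswap : Prod.swap ⁻¹' T = T' := by
    ext p
    simp [hTdef, hT'def, Prod.swap]
  have stepD : ∫ p in T', f p ∂((volume : Measure ℝ).prod (volume : Measure ℝ))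
      = ∫ p in T, f p ∂((volume : Measure ℝ).prod (volume : Measure ℝ)) := by
    have hmp : MeasurePreserving (Prod.swap : ℝ × ℝ → ℝ × ℝ)
        ((volume : Measure ℝ).prod (volume : Measure ℝ))
        ((volume : Measure ℝ).prod (volume : Measure ℝ)) :=
      Measure.measurePreserving_swap
    have hemb : MeasurableEmbedding (Prod.swap : ℝ × ℝ → ℝ × ℝ) :=
      (MeasurableEquiv.prodComm : ℝ × ℝ ≃ᵐ ℝ × ℝ).measurableEmbedding
    have := hmp.setIntegral_preimage_emb hemb f T
    rw [hswap] at this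
    rw [← this]
    refine MeasureTheory.setIntegral_congr_fun hT'm (fun p _ => ?_)
    exact binPdf_symm p.1 p.2 ρ
  -- Step E : triangle integral as iterated integral
  have stepE : ∫ p in T, f p ∂((volume : Measure ℝ).prod (volume : Measure ℝ))
      = ∫ x in Set.Iio h, ∫ y in Set.Iio x, binPdf x y ρ := by
    rw [← MeasureTheory.integral_indicator hTm,
      MeasureTheory.integral_prod _ (hint.indicator hTm)]
    have hpt : ∀ x : ℝ, (∫ y, T.indicator f (x, y))
        = (Set.Iio h).indicator (fun x => ∫ y in Set.Iio x, binPdf x y ρ) x := by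
      intro x
      by_cases hx : x < h
      · rw [Set.indicator_of_mem (by exact hx : x ∈ Set.Iio h),
          ← MeasureTheory.integral_indicator measurableSet_Iio]
        congr 1 with y
        by_cases hy : y < x
        · rw [Set.indicator_of_mem (show (x, y) ∈ T from ⟨hx, hy⟩),
            Set.indicator_of_mem (by exact hy : y ∈ Set.Iio x)]
        · rw [Set.indicator_of_notMem (show (x, y) ∉ T from fun hmem => hy hmem.2),
            Set.indicator_of_notMem (by exact hy : y ∉ Set.Iio x)]
      · rw [Set.indicator_of_notMem (by exact hx : x ∉ Set.Iio h)]
        have : ∀ y : ℝ, T.indicator f (x, y) = 0 := by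
          intro y
          exact Set.indicator_of_notMem (fun hmem => hx hmem.1) f
        simp [this]
    calc ∫ x, ∫ y, T.indicator f (x, y)
        = ∫ x, (Set.Iio h).indicator (fun x => ∫ y in Set.Iio x, binPdf x y ρ) x := by
          exact integral_congr_ae (Filter.Eventually.of_forall hpt)
      _ = ∫ x in Set.Iio h, ∫ y in Set.Iio x, binPdf x y ρ :=
          MeasureTheory.integral_indicator measurableSet_Iio
  -- Step F : conclusion
  have stepF : ∫ x in Set.Iio h, ∫ y in Set.Iio x, binPdf x y ρ
      = binCdf h 0 (-Real.sqrt ((1 - ρ) / 2)) := by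
    unfold binCdf
    exact setIntegral_congr_fun measurableSet_Iio (fun x _ => (inner_transform hρ x).symm)
  rw [stepA, stepB', stepC, stepD, stepE, stepF]
  ring

theorem copula_diagonal_to_line (u ρ : ℝ) (hu : u ∈ Set.Ioo (0 : ℝ) 1)
    (hρ : ρ ∈ Set.Ioo (-1 : ℝ) 1) :
    normCopula u u ρ =
      2 * binCdf (stdQuantile u) 0 (-Real.sqrt ((1 - ρ) / 2)) := by
  unfold normCopula
  exact binCdf_diag hρ (stdQuantile u)
end
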